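/- For every n ∈ {1,…,N}, every prefix x_{<n} of length n−1, and every a ∈ Fin K, the conditional of the target equals the softmax of the optimal state-action values: γ*_n(a|x_{<n}) = exp(Q*_n(a|x_{<n}) − V*_n(x_{<n})). -/

import Mathlib

noncomputable section

/-- Extend a prefix `xp` of length `n` by a completion `c` of the remaining
`N - n` coordinates to a full configuration in `𝕏 = Fin N → Fin K`. -/
def extendPrefix (N K n : ℕ) (hn : n ≤ N) (xp : Fin n → Fin K)
    (c : Fin (N - n) → Fin K) : Fin N → Fin K :=
  fun i => if h : i.1 < n then xp ⟨i.1, h⟩ else c ⟨i.1 - n, by omega⟩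

/-- The optimal value of a prefix `xp` of length `n` (`0 ≤ n ≤ N`):
`V*_{n+1}(x_{≤n}) = log ∑_{completions} exp (∑_{n' > n} R_{n'}(x_{≤n'}))`
(steps are `0`-indexed here: `n' : Fin N` corresponds to step `n'+1`, so the
sum ranges over the indices `n' : Fin N` with `n ≤ n'`). -/
def Vstar (N K : ℕ) (R : (n : Fin N) → (Fin (n.1 + 1) → Fin K) → ℝ)
    (n : ℕ) (hn : n ≤ N) (xp : Fin n → Fin K) : ℝ :=
  Real.log (∑ c : Fin (N - n) → Fin K,
    Real.exp (∑ n' ∈ Finset.univ.filter (fun n' : Fin N => n ≤ n'.1),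
      R n' (fun i => extendPrefix N K n hn xp c (Fin.castLE n'.isLt i))))

/-- The optimal state-action value
`Q*ₙ(a | x_{<n}) = Rₙ(x_{<n}∘a) + V*_{n+1}(x_{<n}∘a)`. -/
def Qstar (N K : ℕ) (R : (n : Fin N) → (Fin (n.1 + 1) → Fin K) → ℝ)
    (n : Fin N) (xp : Fin n.1 → Fin K) (a : Fin K) : ℝ :=
  R n (Fin.snoc xp a) + Vstar N K R (n.1 + 1) n.isLt (Fin.snoc xp a)

/-- The unnormalized target density `γ̂(x) = exp (∑ₙ Rₙ(x_{≤n}))`. -/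
def gammaHat (N K : ℕ) (R : (n : Fin N) → (Fin (n.1 + 1) → Fin K) → ℝ)
    (x : Fin N → Fin K) : ℝ :=
  Real.exp (∑ n : Fin N, R n (fun i => x (Fin.castLE n.isLt i)))

/-- The normalizer `Z = ∑ₓ γ̂(x)`. -/
def Z (N K : ℕ) (R : (n : Fin N) → (Fin (n.1 + 1) → Fin K) → ℝ) : ℝ :=
  ∑ x : Fin N → Fin K, gammaHat N K R x

/-- The normalized target density `γ*(x) = γ̂(x) / Z`. -/
def gammaStar (N K : ℕ) (R : (n : Fin N) → (Fin (n.1 + 1) → Fin K) → ℝ)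
    (x : Fin N → Fin K) : ℝ :=
  gammaHat N K R x / Z N K R

/-- The conditional density of the target:
`γ*ₙ(a | x_{<n}) = (∑_{y : y_{≤n} = x_{<n}∘a} γ*(y)) / (∑_{y : y_{<n} = x_{<n}} γ*(y))`. -/
def condStar (N K : ℕ) (R : (n : Fin N) → (Fin (n.1 + 1) → Fin K) → ℝ)
    (n : Fin N) (xp : Fin n.1 → Fin K) (a : Fin K) : ℝ :=
  (∑ y ∈ Finset.univ.filter (fun y : Fin N → Fin K =>
      (fun i : Fin (n.1 + 1) => y (Fin.castLE n.isLt i)) = Fin.snoc xp a),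
      gammaStar N K R y) /
  (∑ y ∈ Finset.univ.filter (fun y : Fin N → Fin K =>
      (fun i : Fin n.1 => y (Fin.castLE n.isLt.le i)) = xp),
      gammaStar N K R y)

/-! Summing `γ̂` over all completions of a prefix `x_{<n}` factors as
`exp (A(x_{<n}) + V*ₙ(x_{<n}))`, where `A` is the reward collected along the prefix: the rewards
of the steps inside the prefix do not depend on the completion, and the remaining sum is
`exp V*ₙ` by definition. The conditional `γ*ₙ(a|x_{<n})` is a ratio of two such sums (`Z`
cancels), and `A(x_{<n}∘a) = A(x_{<n}) + Rₙ(x_{<n}∘a)`, so the ratio is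
`exp (Rₙ(x_{<n}∘a) + V*_{n+1}(x_{<n}∘a) - V*ₙ(x_{<n}))`. -/

open Finset

section

variable {N K : ℕ}

@[simp]
lemma extendPrefix_castLE {n : ℕ} (hn : n ≤ N) (xp : Fin n → Fin K)
    (c : Fin (N - n) → Fin K) (i : Fin n) :
    extendPrefix N K n hn xp c (Fin.castLE hn i) = xp i := by
  simp [extendPrefix, Fin.castLE]

lemma extendPrefix_add {n : ℕ} (hn : n ≤ N) (xp : Fin n → Fin K)
    (c : Fin (N - n) → Fin K) (j : Fin (N - n)) :
    extendPrefix N K n hn xp c ⟨n + j, by omega⟩ = c j := by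
  simp [extendPrefix]

lemma extendPrefix_suffix {n : ℕ} (hn : n ≤ N) (y : Fin N → Fin K) :
    extendPrefix N K n hn (fun i => y (Fin.castLE hn i)) (fun j => y ⟨n + j, by omega⟩) =
      y := by
  funext i
  by_cases h : i.1 < n
  · simp [extendPrefix, h, Fin.castLE]
  · simp only [extendPrefix, h, dite_false]
    exact congrArg y (Fin.ext (Nat.add_sub_of_le (not_lt.mp h)))

lemma sum_filter_prefix_eq_sum_extendPrefix {β : Type*} [AddCommMonoid β]
    (f : (Fin N → Fin K) → β) {n : ℕ} (hn : n ≤ N) (xp : Fin n → Fin K) :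
    ∑ y ∈ univ.filter (fun y : Fin N → Fin K => (fun i : Fin n => y (Fin.castLE hn i)) = xp),
      f y = ∑ c : Fin (N - n) → Fin K, f (extendPrefix N K n hn xp c) := by
  refine sum_nbij' (fun y j => y ⟨n + j, by omega⟩) (extendPrefix N K n hn xp)
    (by simp) (fun c _ => by simp [funext_iff]) ?_ ?_ ?_
  · rintro y hy
    obtain rfl : _ = xp := by simpa using hy
    exact extendPrefix_suffix hn y
  · intro c _
    funext j
    exact extendPrefix_add hn xp c j
  · rintro y hy
    obtain rfl : _ = xp := by simpa using hy
    rw [extendPrefix_suffix]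

variable (R : (n : Fin N) → (Fin (n.1 + 1) → Fin K) → ℝ)

def prefixReward {n : ℕ} (hn : n ≤ N) (xp : Fin n → Fin K) : ℝ :=
  ∑ j : Fin n, R (Fin.castLE hn j) (fun i => xp (Fin.castLE j.isLt i))

lemma filter_val_lt_eq_map_castLEEmb {n : ℕ} (hn : n ≤ N) :
    univ.filter (fun n' : Fin N => n'.1 < n) = univ.map (Fin.castLEEmb hn) := by
  ext n'
  simp only [mem_filter, mem_univ, true_and, mem_map, Fin.coe_castLEEmb]
  exact ⟨fun h => ⟨⟨n', h⟩, rfl⟩, by rintro ⟨j, rfl⟩; exact j.isLt⟩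

lemma sum_reward_extendPrefix {n : ℕ} (hn : n ≤ N) (xp : Fin n → Fin K)
    (c : Fin (N - n) → Fin K) :
    ∑ n' : Fin N, R n' (fun i => extendPrefix N K n hn xp c (Fin.castLE n'.isLt i)) =
      prefixReward R hn xp + ∑ n' ∈ univ.filter (fun n' : Fin N => n ≤ n'.1),
        R n' (fun i => extendPrefix N K n hn xp c (Fin.castLE n'.isLt i)) := by
  rw [← sum_filter_add_sum_filter_not univ (fun n' : Fin N => n'.1 < n),
    filter_val_lt_eq_map_castLEEmb hn, sum_map]
  simp only [not_lt]
  congr 1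
  refine sum_congr rfl fun j _ => congrArg _ (funext fun i => ?_)
  exact extendPrefix_castLE hn xp c (Fin.castLE j.isLt i)

lemma sum_gammaHat_filter_prefix [Nonempty (Fin K)] {n : ℕ} (hn : n ≤ N)
    (xp : Fin n → Fin K) :
    ∑ y ∈ univ.filter (fun y : Fin N → Fin K => (fun i : Fin n => y (Fin.castLE hn i)) = xp),
      gammaHat N K R y = Real.exp (prefixReward R hn xp + Vstar N K R n hn xp) := by
  have hpos : 0 < ∑ c : Fin (N - n) → Fin K,
      Real.exp (∑ n' ∈ univ.filter (fun n' : Fin N => n ≤ n'.1),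
        R n' (fun i => extendPrefix N K n hn xp c (Fin.castLE n'.isLt i))) :=
    sum_pos (fun _ _ => Real.exp_pos _) univ_nonempty
  rw [sum_filter_prefix_eq_sum_extendPrefix, Real.exp_add, Vstar, Real.exp_log hpos, mul_sum]
  refine sum_congr rfl fun c _ => ?_
  rw [gammaHat, sum_reward_extendPrefix, Real.exp_add]

lemma prefixReward_snoc (n : Fin N) (xp : Fin n.1 → Fin K) (a : Fin K) :
    prefixReward R n.isLt (Fin.snoc xp a) =
      prefixReward R n.isLt.le xp + R n (Fin.snoc xp a) := by
  rw [prefixReward, Fin.sum_univ_castSucc]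
  refine congrArg (· + _) (sum_congr rfl fun j _ => congrArg _ (funext fun i => ?_))
  exact Fin.snoc_castSucc (α := fun _ => Fin K) a xp (Fin.castLE j.isLt i)

lemma Z_pos [Nonempty (Fin K)] : 0 < Z N K R :=
  sum_pos (fun _ _ => Real.exp_pos _) univ_nonempty

lemma sum_gammaStar_div_sum_gammaStar [Nonempty (Fin K)] (s t : Finset (Fin N → Fin K)) :
    (∑ y ∈ s, gammaStar N K R y) / ∑ y ∈ t, gammaStar N K R y =
      (∑ y ∈ s, gammaHat N K R y) / ∑ y ∈ t, gammaHat N K R y := by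
  simp only [gammaStar, ← sum_div]
  exact div_div_div_cancel_right₀ (Z_pos R).ne' _ _

end

theorem cond_eq_exp_qstar_sub_vstar_general (N K : ℕ)
    (R : (n : Fin N) → (Fin (n.1 + 1) → Fin K) → ℝ)
    (n : Fin N) (xp : Fin n.1 → Fin K) (a : Fin K) :
    condStar N K R n xp a =
      Real.exp (Qstar N K R n xp a - Vstar N K R n.1 n.isLt.le xp) := by
  have : Nonempty (Fin K) := ⟨a⟩
  rw [condStar, sum_gammaStar_div_sum_gammaStar, sum_gammaHat_filter_prefix,
    sum_gammaHat_filter_prefix, prefixReward_snoc, ← Real.exp_sub, Qstar]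
  ring_nf

/-- **Target conditionals are the softmax of the optimal state-action values:**
for every step `n`, prefix `x_{<n}` and action `a`,
`γ*ₙ(a|x_{<n}) = exp (Q*ₙ(a|x_{<n}) − V*ₙ(x_{<n}))`. -/
theorem cond_eq_exp_qstar_sub_vstar (N K : ℕ) (hN : 0 < N) (hK : 0 < K)
    (R : (n : Fin N) → (Fin (n.1 + 1) → Fin K) → ℝ)
    (n : Fin N) (xp : Fin n.1 → Fin K) (a : Fin K) :
    condStar N K R n xp a =
      Real.exp (Qstar N K R n xp a - Vstar N K R n.1 n.isLt.le xp) :=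
  cond_eq_exp_qstar_sub_vstar_general N K R n xp a
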